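/- arXiv:0710.3842 — 2 statements merged into one kernel-verified Lean document; each statement's English description precedes it below -/
import Mathlib

section
/- Let 0 < ε < 1 and α = 2 + ε. There exists a constant D > 0 (depending only on ε) such that for every integer m ≥ 0 and every k ∈ ℤ³ \ {0}: Σ_{l ∈ ℤ³, l ≠ 0, l ≠ k} exp(−2m‖l − k/2‖²) / (‖k − l‖^α ‖l‖^α) ≤ D ‖k‖^{−(1 + 2ε)}. -/
noncomputable section

open Real

abbrev Z3 : Type := Fin 3 → ℤ

/-- The integer vector `k` regarded as a vector in `ℝ³`. -/
def toR3 (k : Z3) : EuclideanSpace ℝ (Fin 3) := WithLp.toLp 2 (fun i => (k i : ℝ))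

/-- The Euclidean norm of `k ∈ ℤ³`. -/
def znorm (k : Z3) : ℝ := ‖toR3 k‖

/-
The Gaussian weight is at most `1`. Of the two vectors `l` and `k - l`, the longer one has norm
at least `max 1 (‖k‖ / 2)` and at least the norm of the shorter one, so each term is at most
`max(N, n)^(-α) n^(-α)`, where `n` is the sup-norm of the shorter vector and `N ≈ ‖k‖ / 2` is a
positive integer. A sup-norm sphere of radius `n ≥ 1` in `ℤ³` has at most `26 n²` points, so
the lattice sum is at most `52 ∑ n² max(N, n)^(-α) n^(-α)`. Split at `n = N` and compared with
integrals, both `N^(-α) ∑_{n ≤ N} n^(2-α)` and `∑_{n > N} n^(2-2α)` are `O(N^(3-2α))`, and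
`3 - 2α = -(1 + 2ε)`.
-/

open Finset

theorem sum_Ioc_rpow_le {p : ℝ} (hp : p ≤ 0) (hp1 : p ≠ -1) {a b : ℕ} (ha : 0 < a)
    (hab : a ≤ b) :
    ∑ n ∈ Ioc a b, (n : ℝ) ^ p ≤ ((b : ℝ) ^ (p + 1) - (a : ℝ) ^ (p + 1)) / (p + 1) := by
  have hanti : AntitoneOn (fun x : ℝ => x ^ p) (Set.Icc a b) := fun x hx y _ hxy =>
    Real.rpow_le_rpow_of_nonpos (lt_of_lt_of_le (by exact_mod_cast ha) hx.1) hxy hp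
  have h0 : (0 : ℝ) ∉ Set.uIcc (a : ℝ) b := by
    rw [Set.uIcc_of_le (by exact_mod_cast hab)]
    exact fun h => (Nat.cast_pos.mpr ha).not_ge h.1
  rw [← integral_rpow (Or.inr ⟨hp1, h0⟩), ← Finset.Ico_add_one_add_one_eq_Ioc,
    ← Finset.sum_Ico_add']
  exact_mod_cast hanti.sum_le_integral_Ico hab

theorem sum_Ioc_zero_rpow_le {p : ℝ} (hp1 : -1 < p) (hp : p ≤ 0) (N : ℕ) :
    ∑ n ∈ Ioc 0 N, (n : ℝ) ^ p ≤ (N : ℝ) ^ (p + 1) / (p + 1) := by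
  have hq : 0 < p + 1 := by linarith
  rcases N.eq_zero_or_pos with rfl | hN
  · simp [Real.zero_rpow hq.ne']
  -- the integral comparison starts at `1`: as `0 ^ p = 0`, `x ^ p` is not antitone on `[0, 1]`
  have htail := sum_Ioc_rpow_le hp (by linarith) one_pos hN
  rw [← sum_Ioc_consecutive _ zero_le_one hN, show Ioc 0 1 = {1} from rfl, sum_singleton]
  push_cast at htail ⊢
  rw [Real.one_rpow] at htail ⊢
  have : 1 - 1 / (p + 1) ≤ 0 := by
    rw [sub_nonpos, le_div_iff₀ hq]; linarith
  calc 1 + ∑ n ∈ Ioc 1 N, (n : ℝ) ^ p ≤ 1 + ((N : ℝ) ^ (p + 1) - 1) / (p + 1) := by linarith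
    _ ≤ (N : ℝ) ^ (p + 1) / (p + 1) := by rw [sub_div]; linarith

theorem sum_Ioc_rpow_le_of_lt_neg_one {p : ℝ} (hp : p < -1) {a b : ℕ} (ha : 0 < a)
    (hab : a ≤ b) :
    ∑ n ∈ Ioc a b, (n : ℝ) ^ p ≤ (a : ℝ) ^ (p + 1) / (-(p + 1)) := by
  have hq : 0 < -(p + 1) := by linarith
  refine (sum_Ioc_rpow_le (by linarith) hp.ne ha hab).trans ?_
  rw [← neg_div_neg_eq, neg_sub]
  gcongr
  linarith [Real.rpow_nonneg (Nat.cast_nonneg b) (p + 1)]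

def shellBound (α : ℝ) (N n : ℕ) : ℝ := 1 / ((max N n : ℕ) ^ α * (n : ℝ) ^ α)

theorem shellBound_nonneg (α : ℝ) (N n : ℕ) : 0 ≤ shellBound α N n := by
  unfold shellBound; positivity

theorem shellBound_zero {α : ℝ} (hα : α ≠ 0) (N : ℕ) : shellBound α N 0 = 0 := by
  simp [shellBound, Real.zero_rpow hα]

theorem sq_mul_one_div_rpow_mul_rpow {x c : ℝ} (hx : 0 < x) (hc : 0 < c) (α : ℝ) :
    x ^ 2 * (1 / (c ^ α * x ^ α)) = c ^ (-α) * x ^ (2 - α) := by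
  rw [Real.rpow_neg hc.le, Real.rpow_sub hx, Real.rpow_two]
  field_simp

theorem sum_Ioc_sq_mul_shellBound_le {α : ℝ} (hα2 : 2 ≤ α) (hα3 : α < 3) {N M : ℕ}
    (hN : 0 < N) (hNM : N ≤ M) :
    ∑ n ∈ Ioc 0 M, (n : ℝ) ^ 2 * shellBound α N n
      ≤ (1 / (3 - α) + 1 / (2 * α - 3)) * (N : ℝ) ^ (3 - 2 * α) := by
  have hN' : (0 : ℝ) < N := by exact_mod_cast hN
  have hnear : ∑ n ∈ Ioc 0 N, (n : ℝ) ^ 2 * shellBound α N n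
      = (N : ℝ) ^ (-α) * ∑ n ∈ Ioc 0 N, (n : ℝ) ^ (2 - α) := by
    rw [mul_sum]
    refine sum_congr rfl fun n hn => ?_
    rw [mem_Ioc] at hn
    rw [shellBound, max_eq_left hn.2,
      sq_mul_one_div_rpow_mul_rpow (by exact_mod_cast hn.1) hN']
  have hfar : ∑ n ∈ Ioc N M, (n : ℝ) ^ 2 * shellBound α N n
      = ∑ n ∈ Ioc N M, (n : ℝ) ^ (2 - 2 * α) := by
    refine sum_congr rfl fun n hn => ?_
    rw [mem_Ioc] at hn
    have hn0 : (0 : ℝ) < n := by exact_mod_cast hN.trans hn.1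
    rw [shellBound, max_eq_right hn.1.le, sq_mul_one_div_rpow_mul_rpow hn0 hn0,
      ← Real.rpow_add hn0]
    ring_nf
  have hnear_le := sum_Ioc_zero_rpow_le (p := 2 - α) (by linarith) (by linarith) N
  have hfar_le := sum_Ioc_rpow_le_of_lt_neg_one (p := 2 - 2 * α) (by linarith) hN hNM
  rw [← sum_Ioc_consecutive _ (Nat.zero_le N) hNM, hnear, hfar]
  have hexp : (N : ℝ) ^ (-α) * (N : ℝ) ^ (2 - α + 1) = (N : ℝ) ^ (3 - 2 * α) := by
    rw [← Real.rpow_add hN']; ring_nf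
  calc (N : ℝ) ^ (-α) * ∑ n ∈ Ioc 0 N, (n : ℝ) ^ (2 - α) + ∑ n ∈ Ioc N M, (n : ℝ) ^ (2 - 2 * α)
      ≤ (N : ℝ) ^ (-α) * ((N : ℝ) ^ (2 - α + 1) / (2 - α + 1))
        + (N : ℝ) ^ (2 - 2 * α + 1) / (-(2 - 2 * α + 1)) := by gcongr
    _ = _ := by rw [mul_div_assoc', hexp]; ring_nf

def supNorm (l : Z3) : ℕ := univ.sup fun i => (l i).natAbs

theorem supNorm_eq_zero {l : Z3} : supNorm l = 0 ↔ l = 0 := by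
  simp [supNorm, funext_iff]

theorem supNorm_le_znorm (l : Z3) : (supNorm l : ℝ) ≤ znorm l := by
  obtain ⟨i, -, hi⟩ := exists_mem_eq_sup univ univ_nonempty fun i => (l i).natAbs
  rw [supNorm, hi, Nat.cast_natAbs, Int.cast_abs]
  exact PiLp.norm_apply_le (toR3 l) i

theorem one_le_znorm {l : Z3} (hl : l ≠ 0) : 1 ≤ znorm l :=
  le_trans (by exact_mod_cast Nat.one_le_iff_ne_zero.mpr (supNorm_eq_zero.not.mpr hl))
    (supNorm_le_znorm l)

theorem toR3_sub (k l : Z3) : toR3 (k - l) = toR3 k - toR3 l := by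
  ext i
  simp [toR3]

theorem znorm_le_add (k l : Z3) : znorm k ≤ znorm l + znorm (k - l) := by
  simpa only [znorm, toR3_sub] using norm_le_norm_add_norm_sub' (toR3 k) (toR3 l)

def cube (n : ℕ) : Finset Z3 := Fintype.piFinset fun _ => Icc (-(n : ℤ)) n

theorem mem_cube {l : Z3} {n : ℕ} : l ∈ cube n ↔ supNorm l ≤ n := by
  simp only [cube, Fintype.mem_piFinset, mem_Icc, supNorm, Finset.sup_le_iff, mem_univ,
    true_imp_iff]
  exact forall_congr' fun i => by omega

theorem card_cube (n : ℕ) : #(cube n) = (2 * n + 1) ^ 3 := by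
  simp [cube, Int.card_Icc]
  omega

theorem card_filter_supNorm_eq_le (s : Finset Z3) {n : ℕ} (hn : 0 < n) :
    #{l ∈ s | supNorm l = n} ≤ 26 * n ^ 2 := by
  have hsub : {l ∈ s | supNorm l = n} ⊆ cube n \ cube (n - 1) := fun l hl => by
    rw [mem_filter] at hl
    rw [mem_sdiff, mem_cube, mem_cube]
    omega
  have hcube : cube (n - 1) ⊆ cube n := fun l hl => by
    rw [mem_cube] at hl ⊢; omega
  refine (card_le_card hsub).trans ?_
  rw [card_sdiff_of_subset hcube, card_cube, card_cube]
  obtain ⟨m, rfl⟩ := Nat.exists_eq_add_of_lt hn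
  simp only [zero_add, Nat.add_sub_cancel]
  ring_nf
  omega

theorem sum_comp_supNorm_le (c : ℕ → ℝ) (hc : ∀ n, 0 ≤ c n) (hc0 : c 0 = 0)
    (s : Finset Z3) {M : ℕ} (hM : ∀ l ∈ s, supNorm l ≤ M) :
    ∑ l ∈ s, c (supNorm l) ≤ 26 * ∑ n ∈ Ioc 0 M, (n : ℝ) ^ 2 * c n := by
  rw [← sum_filter_of_ne (p := fun l => supNorm l ≠ 0) fun l _ h hl => h (by rw [hl, hc0]),
    ← sum_fiberwise_of_maps_to (t := Ioc 0 M) (g := supNorm) fun l hl => by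
      rw [mem_filter] at hl
      exact mem_Ioc.mpr ⟨Nat.pos_of_ne_zero hl.2, hM l hl.1⟩,
    mul_sum]
  refine sum_le_sum fun n hn => ?_
  rw [sum_congr rfl fun l hl => by rw [(mem_filter.mp hl).2], sum_const, nsmul_eq_mul,
    ← mul_assoc]
  gcongr
  · exact hc n
  exact_mod_cast card_filter_supNorm_eq_le _ (mem_Ioc.mp hn).1

theorem sum_shellBound_supNorm_le {α : ℝ} (hα2 : 2 ≤ α) (hα3 : α < 3) {N : ℕ} (hN : 0 < N)
    (s : Finset Z3) :
    ∑ l ∈ s, shellBound α N (supNorm l)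
      ≤ 26 * ((1 / (3 - α) + 1 / (2 * α - 3)) * (N : ℝ) ^ (3 - 2 * α)) := by
  refine (sum_comp_supNorm_le _ (shellBound_nonneg α N) (shellBound_zero (by linarith) N) s
    (M := max N (s.sup supNorm)) fun l hl => le_max_of_le_right (le_sup hl)).trans ?_
  gcongr
  exact sum_Ioc_sq_mul_shellBound_le hα2 hα3 hN (le_max_left _ _)

theorem one_div_le_shellBound {α : ℝ} (hα : 0 ≤ α) {N : ℕ} {j l : Z3} (hl : l ≠ 0)
    (hN : (N : ℝ) ≤ znorm j) (hlj : znorm l ≤ znorm j) :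
    1 / (znorm j ^ α * znorm l ^ α) ≤ shellBound α N (supNorm l) := by
  have hn : (0 : ℝ) < supNorm l := by
    exact_mod_cast Nat.pos_of_ne_zero (supNorm_eq_zero.not.mpr hl)
  have hmax : ((max N (supNorm l) : ℕ) : ℝ) ≤ znorm j := by
    rw [Nat.cast_max]
    exact max_le hN ((supNorm_le_znorm l).trans hlj)
  have hpos : (0 : ℝ) < ((max N (supNorm l) : ℕ) : ℝ) :=
    hn.trans_le (by exact_mod_cast le_max_right _ _)
  unfold shellBound
  gcongr
  · exact Real.rpow_nonneg (norm_nonneg _) α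
  · exact supNorm_le_znorm l

theorem one_div_le_shellBound_add {α : ℝ} (hα : 0 ≤ α) {N : ℕ} {k l : Z3}
    (hN : (N : ℝ) ≤ max 1 (znorm k / 2)) (hl : l ≠ 0) (hlk : l ≠ k) :
    1 / (znorm (k - l) ^ α * znorm l ^ α)
      ≤ shellBound α N (supNorm l) + shellBound α N (supNorm (k - l)) := by
  have hkl : k - l ≠ 0 := sub_ne_zero.mpr hlk.symm
  have htri := znorm_le_add k l
  rcases le_total (znorm l) (znorm (k - l)) with h | h
  · have hNj : (N : ℝ) ≤ znorm (k - l) := hN.trans (max_le (one_le_znorm hkl) (by linarith))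
    exact (one_div_le_shellBound hα hl hNj h).trans
      (le_add_of_nonneg_right (shellBound_nonneg _ _ _))
  · have hNj : (N : ℝ) ≤ znorm l := hN.trans (max_le (one_le_znorm hl) (by linarith))
    rw [mul_comm]
    exact (one_div_le_shellBound hα hkl hNj h).trans
      (le_add_of_nonneg_left (shellBound_nonneg _ _ _))

theorem tsum_div_rpow_mul_rpow_le {α : ℝ} (hα2 : 2 ≤ α) (hα3 : α < 3) (w : Z3 → ℝ)
    (hw : ∀ l, w l ≤ 1) (k : Z3) {N : ℕ} (hN0 : 0 < N) (hN : (N : ℝ) ≤ max 1 (znorm k / 2)) :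
    ∑' l : Z3, (if l ≠ 0 ∧ l ≠ k then w l / (znorm (k - l) ^ α * znorm l ^ α) else 0)
      ≤ 52 * ((1 / (3 - α) + 1 / (2 * α - 3)) * (N : ℝ) ^ (3 - 2 * α)) := by
  have hB : 0 ≤ (1 / (3 - α) + 1 / (2 * α - 3)) * (N : ℝ) ^ (3 - 2 * α) := by
    have : 0 < 3 - α := by linarith
    have : 0 < 2 * α - 3 := by linarith
    positivity
  refine tsum_le_of_sum_le' (mul_nonneg (by norm_num) hB) fun s => ?_
  have hterm : ∀ l, (if l ≠ 0 ∧ l ≠ k then w l / (znorm (k - l) ^ α * znorm l ^ α) else 0)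
      ≤ shellBound α N (supNorm l) + shellBound α N (supNorm (k - l)) := fun l => by
    split_ifs with h
    · refine le_trans ?_ (one_div_le_shellBound_add (by linarith) hN h.1 h.2)
      gcongr
      · exact mul_nonneg (Real.rpow_nonneg (norm_nonneg _) _) (Real.rpow_nonneg (norm_nonneg _) _)
      · exact hw l
    · exact add_nonneg (shellBound_nonneg _ _ _) (shellBound_nonneg _ _ _)
  calc _ ≤ ∑ l ∈ s, (shellBound α N (supNorm l) + shellBound α N (supNorm (k - l))) :=
        sum_le_sum fun l _ => hterm l
    _ = ∑ l ∈ s, shellBound α N (supNorm l)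
          + ∑ l ∈ s.image (k - ·), shellBound α N (supNorm l) := by
        rw [sum_add_distrib, sum_image fun _ _ _ _ h => sub_right_injective h]
    _ ≤ _ := by
        linarith [sum_shellBound_supNorm_le hα2 hα3 hN0 s,
          sum_shellBound_supNorm_le hα2 hα3 hN0 (s.image (k - ·))]

theorem exists_nat_le_max_one_half_lt {x : ℝ} (hx : 0 ≤ x) :
    ∃ N : ℕ, 0 < N ∧ (N : ℝ) ≤ max 1 (x / 2) ∧ x / 4 < N := by
  refine ⟨max 1 ⌊x / 2⌋₊, by omega, ?_, ?_⟩
  · rw [Nat.cast_max, Nat.cast_one]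
    exact max_le_max le_rfl (Nat.floor_le (by positivity))
  · have h1 : (1 : ℝ) ≤ (max 1 ⌊x / 2⌋₊ : ℕ) := by exact_mod_cast le_max_left _ _
    have h2 : (⌊x / 2⌋₊ : ℝ) ≤ (max 1 ⌊x / 2⌋₊ : ℕ) := by exact_mod_cast le_max_right _ _
    linarith [Nat.lt_floor_add_one (x / 2)]

theorem rpow_le_four_rpow_mul_rpow {x y q : ℝ} (hx : 0 < x) (hxy : x / 4 ≤ y) (hq : q ≤ 0) :
    y ^ q ≤ 4 ^ (-q) * x ^ q := by
  calc y ^ q ≤ (x / 4) ^ q := Real.rpow_le_rpow_of_nonpos (by positivity) hxy hq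
    _ = 4 ^ (-q) * x ^ q := by
        rw [Real.div_rpow hx.le (by norm_num), div_eq_mul_inv, ← Real.rpow_neg (by norm_num),
          mul_comm]

/-- Let `0 < ε < 1` and `α = 2 + ε`.  There is a constant `D > 0` depending
only on `ε` such that for every integer `m ≥ 0` and every `k ∈ ℤ³ \ {0}`,
`Σ_{l ≠ 0, l ≠ k} exp(−2m‖l − k/2‖²) / (‖k − l‖^α ‖l‖^α) ≤ D ‖k‖^{−(1 + 2ε)}`. -/
theorem statement2 (ε : ℝ) (hε : 0 < ε) (hε1 : ε < 1) (α : ℝ) (hα : α = 2 + ε) :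
    ∃ D : ℝ, 0 < D ∧ ∀ (m : ℕ) (k : Z3), k ≠ 0 →
      (∑' l : Z3, if l ≠ 0 ∧ l ≠ k then
          Real.exp (-2 * (m : ℝ) * ‖toR3 l - (1 / 2 : ℝ) • toR3 k‖ ^ 2)
            / (znorm (k - l) ^ α * znorm l ^ α)
        else 0)
      ≤ D * znorm k ^ (-(1 + 2 * ε)) := by
  have hα2 : 2 ≤ α := by linarith
  have hα3 : α < 3 := by linarith
  have h3α : 0 < 3 - α := by linarith
  have h2α : 0 < 2 * α - 3 := by linarith
  refine ⟨52 * (1 / (3 - α) + 1 / (2 * α - 3)) * 4 ^ (2 * α - 3), by positivity,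
    fun m k hk => ?_⟩
  have hK : 0 < znorm k := zero_lt_one.trans_le (one_le_znorm hk)
  obtain ⟨N, hN0, hNK, hKN⟩ := exists_nat_le_max_one_half_lt hK.le
  have hgauss : ∀ l, Real.exp (-2 * (m : ℝ) * ‖toR3 l - (1 / 2 : ℝ) • toR3 k‖ ^ 2) ≤ 1 :=
    fun l => Real.exp_le_one_iff.mpr
      (mul_nonpos_of_nonpos_of_nonneg (by linarith [m.cast_nonneg (α := ℝ)]) (sq_nonneg _))
  calc _ ≤ 52 * ((1 / (3 - α) + 1 / (2 * α - 3)) * (N : ℝ) ^ (3 - 2 * α)) :=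
        tsum_div_rpow_mul_rpow_le hα2 hα3 _ hgauss k hN0 hNK
    _ ≤ 52 * ((1 / (3 - α) + 1 / (2 * α - 3)) * (4 ^ (-(3 - 2 * α)) * znorm k ^ (3 - 2 * α))) := by
        gcongr
        exact rpow_le_four_rpow_mul_rpow hK hKN.le (by linarith)
    _ = _ := by
        rw [neg_sub, show 3 - 2 * α = -(1 + 2 * ε) by rw [hα]; ring]
        ring
end
end

section
/- Let 0 < 3ε < 1, α = 2 + ε, δ > 0, M > 0, and let m ≥ 0 be an integer. Suppose H(s, k) = exp(−(m + s)|k|²) v₀(k) where |v₀(k)| ≤ δ|k|^{−α} for all k ≠ 0, and suppose h : [0, ∞) × (ℤ³ \ {0}) → ℂ³ satisfies |h(s, k)| ≤ M |k|^{−(2 + 2ε)} exp(−(m + s)|k|²/2) for all s ∈ [0, 1] and k ≠ 0. Then there exists a constant D > 0 depending only on ε such that for all t ∈ [0, 1] and all k ∈ ℤ³ \ {0}: |B(H, h)(t, k)| ≤ D δ M exp(−(m + t)|k|²/3) (1 − exp(−t|k|²)) / |k|, and the same bound holds for |B(h, H)(t, k)|. -/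
noncomputable section

open Real MeasureTheory

abbrev C3 : Type := EuclideanSpace ℂ (Fin 3)

/-- The integer vector `k` regarded as a vector in `ℂ³`. -/
def toC3 (k : Z3) : C3 := WithLp.toLp 2 (fun i => (k i : ℂ))

/-- The bilinear dot product `⟨a, b⟩ = Σᵢ aᵢbᵢ` on `ℂ³` (no conjugation). -/
def cdot (a b : C3) : ℂ := ∑ i, a i * b i

/-- The Leray projector `P_k x = x − (⟨k, x⟩/|k|²) k`. -/
def leray (k : Z3) (x : C3) : C3 := x - ((cdot (toC3 k) x) / ((znorm k : ℂ) ^ 2)) • toC3 k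

/-- The Navier–Stokes bilinear operator
`B(f,g)(t,k) = 2πi ∫₀ᵗ e^{−(t−s)|k|²} Σ_{l ≠ 0, l ≠ k} ⟨k, f(s,k−l)⟩ P_k g(s,l) ds`. -/
def nsB (f g : ℝ → Z3 → C3) (t : ℝ) (k : Z3) : C3 :=
  (2 * (π : ℂ) * Complex.I) • ∫ s in (0:ℝ)..t,
    Real.exp (-(t - s) * znorm k ^ 2) •
      ∑' l : Z3, if l ≠ 0 ∧ l ≠ k then cdot (toC3 k) (f s (k - l)) • leray k (g s l)
        else (0 : C3)

/-!
Each summand of `B(f, g)(t, k)` is bounded by `2|k| · |f(s, k - l)| · |g(s, l)|`, because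
`|⟨k, x⟩| ≤ |k||x|` and `|P_k x| ≤ 2|x|`. Both factors decay like `|j|⁻²` (as `α ≥ 2` and
`2 + 2ε ≥ 2`), and their Gaussian factors combine to `exp(-(m + s)|k|²/3)` since
`|k|² ≤ 3(|k - l|² + |l|²/2)`. The sum over `l` of `|k - l|⁻²|l|⁻²` is bounded uniformly in `k`
by `∑_{j ≠ 0} |j|⁻⁴ < ∞`, and integrating the heat factor `exp(-(t - s)|k|²)` in time gives
`3(1 - exp(-t|k|²))/(2|k|²)`, which turns the factor `|k|` into `1/|k|`.
-/

lemma one_le_znorm_s6 {k : Z3} (hk : k ≠ 0) : 1 ≤ znorm k := by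
  obtain ⟨i, hi⟩ : ∃ i, k i ≠ 0 := Function.ne_iff.mp hk
  calc (1 : ℝ) ≤ |(k i : ℝ)| := by exact_mod_cast Int.one_le_abs hi
    _ = ‖toR3 k i‖ := by simp [toR3]
    _ ≤ znorm k := PiLp.norm_apply_le (toR3 k) i

lemma znorm_pos {k : Z3} (hk : k ≠ 0) : 0 < znorm k := one_pos.trans_le (one_le_znorm_s6 hk)

lemma znorm_add_le (j l : Z3) : znorm (j + l) ≤ znorm j + znorm l := by
  have : toR3 (j + l) = toR3 j + toR3 l := by ext i; simp [toR3]
  rw [znorm, this]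
  exact norm_add_le _ _

lemma norm_toC3 (k : Z3) : ‖toC3 k‖ = znorm k := by
  simp [toC3, znorm, toR3, EuclideanSpace.norm_eq]

lemma norm_cdot_toC3_le (k : Z3) (x : C3) : ‖cdot (toC3 k) x‖ ≤ znorm k * ‖x‖ := by
  have : cdot (toC3 k) x = inner ℂ (toC3 k) x := by
    simp only [cdot, PiLp.inner_apply, RCLike.inner_apply', toC3, PiLp.toLp_apply, map_intCast]
  rw [this, ← norm_toC3]
  exact norm_inner_le_norm _ _

lemma norm_leray_le {k : Z3} (hk : k ≠ 0) (x : C3) : ‖leray k x‖ ≤ 2 * ‖x‖ := by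
  have hz := znorm_pos hk
  have hproj : ‖(cdot (toC3 k) x / (znorm k : ℂ) ^ 2) • toC3 k‖ ≤ ‖x‖ := by
    rw [norm_smul, norm_div, norm_toC3, norm_pow, Complex.norm_real, Real.norm_of_nonneg hz.le]
    calc ‖cdot (toC3 k) x‖ / znorm k ^ 2 * znorm k
        ≤ znorm k * ‖x‖ / znorm k ^ 2 * znorm k := by gcongr; exact norm_cdot_toC3_le k x
      _ = ‖x‖ := by field_simp
  calc ‖leray k x‖ ≤ ‖x‖ + ‖(cdot (toC3 k) x / (znorm k : ℂ) ^ 2) • toC3 k‖ := norm_sub_le _ _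
    _ ≤ 2 * ‖x‖ := by linarith

lemma summable_znorm_inv_pow {n : ℕ} (hn : 3 < n) : Summable fun k : Z3 => (znorm k)⁻¹ ^ n := by
  set b := (EuclideanSpace.basisFun (Fin 3) ℝ).toBasis
  have hrank : Module.finrank ℤ (Submodule.span ℤ (Set.range b)) = 3 := by
    rw [ZLattice.rank ℝ]
    simp
  have hL := ZLattice.summable_norm_pow_inv (L := Submodule.span ℤ (Set.range b)) n (by omega)
  refine ((b.restrictScalars ℤ).equivFun.toEquiv.symm.summable_iff.mpr hL).congr fun k => ?_
  have hk : ((b.restrictScalars ℤ).equivFun.symm k : EuclideanSpace ℝ (Fin 3)) = toR3 k := by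
    ext i
    rw [Module.Basis.equivFun_symm_apply, Submodule.coe_sum]
    simp only [Submodule.coe_smul_of_tower, Module.Basis.restrictScalars_apply]
    simp [toR3, b, Pi.single_apply]
  simp only [Function.comp_apply, znorm, ← hk]
  rfl

/-- `∑_{k ≠ 0} |k|⁻⁴`: the term `k = 0` vanishes because `0⁻¹ = 0`. -/
def latticeSumInvFour : ℝ := ∑' k : Z3, (znorm k)⁻¹ ^ 4

lemma latticeSumInvFour_pos : 0 < latticeSumInvFour := by
  have hk : (Pi.single 0 1 : Z3) ≠ 0 := by simp
  have := znorm_pos hk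
  exact (summable_znorm_inv_pow (by norm_num)).tsum_pos (fun _ => by positivity) _
    (by positivity)

lemma convolution_weight_le (k l : Z3) :
    (znorm (k - l))⁻¹ ^ 2 * (znorm l)⁻¹ ^ 2 ≤ ((znorm (k - l))⁻¹ ^ 4 + (znorm l)⁻¹ ^ 4) / 2 := by
  nlinarith [sq_nonneg ((znorm (k - l))⁻¹ ^ 2 - (znorm l)⁻¹ ^ 2)]

lemma summable_convolution_weight (k : Z3) :
    Summable fun l => (znorm (k - l))⁻¹ ^ 2 * (znorm l)⁻¹ ^ 2 := by
  have h4 := summable_znorm_inv_pow (n := 4) (by norm_num)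
  exact .of_nonneg_of_le (fun _ => by positivity) (convolution_weight_le k)
    (((h4.comp_injective (Equiv.subLeft k).injective).add h4).div_const 2)

lemma tsum_convolution_weight_le (k : Z3) :
    ∑' l, (znorm (k - l))⁻¹ ^ 2 * (znorm l)⁻¹ ^ 2 ≤ latticeSumInvFour := by
  have h4 := summable_znorm_inv_pow (n := 4) (by norm_num)
  have h4k : Summable fun l => (znorm (k - l))⁻¹ ^ 4 :=
    h4.comp_injective (Equiv.subLeft k).injective
  have hshift : ∑' l, (znorm (k - l))⁻¹ ^ 4 = latticeSumInvFour :=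
    (Equiv.subLeft k).tsum_eq fun j => (znorm j)⁻¹ ^ 4
  calc ∑' l, (znorm (k - l))⁻¹ ^ 2 * (znorm l)⁻¹ ^ 2
      ≤ ∑' l, ((znorm (k - l))⁻¹ ^ 4 + (znorm l)⁻¹ ^ 4) / 2 :=
        (summable_convolution_weight k).tsum_le_tsum (convolution_weight_le k)
          ((h4k.add h4).div_const 2)
    _ = latticeSumInvFour := by
        rw [tsum_div_const, h4k.tsum_add h4, hshift, latticeSumInvFour]
        ring

lemma norm_tsum_convolution_le {k : Z3} (hk : k ≠ 0) {u v : Z3 → C3} {B : ℝ} (hB : 0 ≤ B)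
    (huv : ∀ l, l ≠ 0 → l ≠ k →
      ‖u (k - l)‖ * ‖v l‖ ≤ B * ((znorm (k - l))⁻¹ ^ 2 * (znorm l)⁻¹ ^ 2)) :
    ‖∑' l, if l ≠ 0 ∧ l ≠ k then cdot (toC3 k) (u (k - l)) • leray k (v l) else (0 : C3)‖
      ≤ 2 * znorm k * B * latticeSumInvFour := by
  have hz := znorm_pos hk
  have hterm : ∀ l, ‖if l ≠ 0 ∧ l ≠ k then cdot (toC3 k) (u (k - l)) • leray k (v l)
      else (0 : C3)‖ ≤ 2 * znorm k * B * ((znorm (k - l))⁻¹ ^ 2 * (znorm l)⁻¹ ^ 2) := by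
    intro l
    split_ifs with hl
    · rw [norm_smul]
      calc ‖cdot (toC3 k) (u (k - l))‖ * ‖leray k (v l)‖
          ≤ znorm k * ‖u (k - l)‖ * (2 * ‖v l‖) :=
            mul_le_mul (norm_cdot_toC3_le _ _) (norm_leray_le hk _) (norm_nonneg _)
              (by positivity)
        _ = 2 * znorm k * (‖u (k - l)‖ * ‖v l‖) := by ring
        _ ≤ _ := by
            rw [mul_assoc _ B]
            exact mul_le_mul_of_nonneg_left (huv l hl.1 hl.2) (by positivity)
    · rw [norm_zero]
      positivity
  calc _ ≤ ∑' l, 2 * znorm k * B * ((znorm (k - l))⁻¹ ^ 2 * (znorm l)⁻¹ ^ 2) :=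
        tsum_of_norm_bounded ((summable_convolution_weight k).mul_left _).hasSum hterm
    _ = 2 * znorm k * B * ∑' l, (znorm (k - l))⁻¹ ^ 2 * (znorm l)⁻¹ ^ 2 := tsum_mul_left
    _ ≤ 2 * znorm k * B * latticeSumInvFour := by
        gcongr
        exact tsum_convolution_weight_le k

lemma integral_exp_mul_sub {c : ℝ} (hc : c ≠ 0) (t : ℝ) :
    ∫ s in (0 : ℝ)..t, exp (c * (s - t)) = (1 - exp (-(c * t))) / c := by
  have hderiv : ∀ s ∈ Set.uIcc 0 t,
      HasDerivAt (fun s => exp (c * (s - t)) / c) (exp (c * (s - t))) s := fun s _ => by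
    simpa [hc] using (((hasDerivAt_id s).sub_const t).const_mul c).exp.div_const c
  rw [intervalIntegral.integral_eq_sub_of_hasDerivAt hderiv
    ((by fun_prop : Continuous _).intervalIntegrable _ _)]
  simp only [sub_self, mul_zero, exp_zero, zero_sub, mul_neg]
  ring

lemma integral_heat_mul_exp_le {x : ℝ} (hx : 0 < x) {t : ℝ} (ht : 0 ≤ t) (μ : ℝ) :
    ∫ s in (0 : ℝ)..t, exp (-(t - s) * x) * exp (-(μ + s) * x / 3)
      ≤ 3 / (2 * x) * exp (-(μ + t) * x / 3) * (1 - exp (-t * x)) := by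
  have hsplit : ∀ s, exp (-(t - s) * x) * exp (-(μ + s) * x / 3)
      = exp (-(μ + t) * x / 3) * exp (2 * x / 3 * (s - t)) := fun s => by
    rw [← exp_add, ← exp_add]; ring_nf
  simp_rw [hsplit]
  rw [intervalIntegral.integral_const_mul, integral_exp_mul_sub (by positivity)]
  have hdecay : exp (-t * x) ≤ exp (-(2 * x / 3 * t)) := exp_le_exp.mpr (by nlinarith)
  calc exp (-(μ + t) * x / 3) * ((1 - exp (-(2 * x / 3 * t))) / (2 * x / 3))
      = 3 / (2 * x) * exp (-(μ + t) * x / 3) * (1 - exp (-(2 * x / 3 * t))) := by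
        field_simp
    _ ≤ 3 / (2 * x) * exp (-(μ + t) * x / 3) * (1 - exp (-t * x)) := by gcongr

lemma sq_le_three_mul_of_le_add {a b c : ℝ} (hc : 0 ≤ c) (h : c ≤ a + b) :
    c ^ 2 ≤ 3 * (a ^ 2 + b ^ 2 / 2) := by
  nlinarith [sq_nonneg (2 * a - b)]

lemma exp_mul_exp_le_of_le_add {r a b c : ℝ} (hr : 0 ≤ r) (hc : 0 ≤ c) (h : c ≤ a + b) :
    exp (-r * a ^ 2) * exp (-r * b ^ 2 / 2) ≤ exp (-r * c ^ 2 / 3) := by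
  rw [← exp_add, exp_le_exp]
  nlinarith [sq_le_three_mul_of_le_add hc h]

lemma rpow_neg_le_inv_pow {a p : ℝ} (ha : 1 ≤ a) {n : ℕ} (hp : n ≤ p) : a ^ (-p) ≤ a⁻¹ ^ n :=
  calc a ^ (-p) ≤ a ^ (-(n : ℝ)) := Real.rpow_le_rpow_of_exponent_le ha (by linarith)
    _ = a⁻¹ ^ n := by rw [Real.rpow_neg (by positivity), Real.rpow_natCast, inv_pow]

lemma norm_mul_norm_le_of_gaussian_bounds {x y : C3} {j l : Z3} {δ M r : ℝ} (hδ : 0 ≤ δ)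
    (hM : 0 ≤ M) (hr : 0 ≤ r)
    (hx : ‖x‖ ≤ δ * (znorm j)⁻¹ ^ 2 * exp (-r * znorm j ^ 2))
    (hy : ‖y‖ ≤ M * (znorm l)⁻¹ ^ 2 * exp (-r * znorm l ^ 2 / 2)) :
    ‖x‖ * ‖y‖ ≤ δ * M * exp (-r * znorm (j + l) ^ 2 / 3) * ((znorm j)⁻¹ ^ 2 * (znorm l)⁻¹ ^ 2) :=
  calc ‖x‖ * ‖y‖ ≤ (δ * (znorm j)⁻¹ ^ 2 * exp (-r * znorm j ^ 2))
        * (M * (znorm l)⁻¹ ^ 2 * exp (-r * znorm l ^ 2 / 2)) :=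
        mul_le_mul hx hy (norm_nonneg y) (by positivity)
    _ = δ * M * (exp (-r * znorm j ^ 2) * exp (-r * znorm l ^ 2 / 2))
        * ((znorm j)⁻¹ ^ 2 * (znorm l)⁻¹ ^ 2) := by ring
    _ ≤ _ := by
        gcongr
        exact exp_mul_exp_le_of_le_add hr (norm_nonneg _) (znorm_add_le j l)

lemma norm_nsB_le {f g : ℝ → Z3 → C3} {k : Z3} (hk : k ≠ 0) {t : ℝ} (ht : 0 ≤ t) (μ : ℝ)
    {A : ℝ} (hA : 0 ≤ A)
    (hfg : ∀ s ∈ Set.Icc 0 t, ∀ l, l ≠ 0 → l ≠ k → ‖f s (k - l)‖ * ‖g s l‖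
      ≤ A * exp (-(μ + s) * znorm k ^ 2 / 3) * ((znorm (k - l))⁻¹ ^ 2 * (znorm l)⁻¹ ^ 2)) :
    ‖nsB f g t k‖ ≤ 6 * π * latticeSumInvFour * A * exp (-(μ + t) * znorm k ^ 2 / 3)
      * (1 - exp (-t * znorm k ^ 2)) / znorm k := by
  have hz := znorm_pos hk
  have h2πi : ‖2 * (π : ℂ) * Complex.I‖ = 2 * π := by simp [pi_pos.le]
  rw [nsB, norm_smul, h2πi]
  set x := znorm k ^ 2 with hx
  set c := 2 * znorm k * A * latticeSumInvFour
  have hc : 0 ≤ c := by have := latticeSumInvFour_pos; positivity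
  have hintegrand : ∀ s ∈ Set.Ioc 0 t, ‖exp (-(t - s) * x) • ∑' l, if l ≠ 0 ∧ l ≠ k then
        cdot (toC3 k) (f s (k - l)) • leray k (g s l) else (0 : C3)‖
      ≤ c * (exp (-(t - s) * x) * exp (-(μ + s) * x / 3)) := by
    intro s hs
    rw [norm_smul, Real.norm_of_nonneg (exp_pos _).le]
    have hsum := norm_tsum_convolution_le hk (by positivity)
      (hfg s (Set.Ioc_subset_Icc_self hs))
    calc _ ≤ exp (-(t - s) * x) * (2 * znorm k * (A * exp (-(μ + s) * x / 3))
          * latticeSumInvFour) := by gcongr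
      _ = _ := by ring
  calc _ ≤ 2 * π * (c * ∫ s in (0 : ℝ)..t, exp (-(t - s) * x) * exp (-(μ + s) * x / 3)) := by
        rw [← intervalIntegral.integral_const_mul]
        gcongr
        exact intervalIntegral.norm_integral_le_of_norm_le ht
          (.of_forall hintegrand) ((by fun_prop : Continuous _).intervalIntegrable _ _)
    _ ≤ 2 * π * (c * (3 / (2 * x) * exp (-(μ + t) * x / 3) * (1 - exp (-t * x)))) := by
        gcongr
        exact integral_heat_mul_exp_le (by positivity) ht μ
    _ = _ := by
        rw [hx]
        field_simp
        ring

theorem statement6_general (ε : ℝ) (hε : 0 < 3 * ε)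
    (α : ℝ) (hα : α = 2 + ε) :
    ∃ D : ℝ, 0 < D ∧
      ∀ (δ M : ℝ), 0 < δ → 0 < M → ∀ (m : ℕ) (v₀ : Z3 → C3) (H h : ℝ → Z3 → C3),
        (∀ k : Z3, k ≠ 0 → ‖v₀ k‖ ≤ δ * znorm k ^ (-α)) →
        (∀ (s : ℝ) (k : Z3), H s k = Real.exp (-((m : ℝ) + s) * znorm k ^ 2) • v₀ k) →
        (∀ s ∈ Set.Icc (0 : ℝ) 1, ∀ k : Z3, k ≠ 0 →
          ‖h s k‖ ≤ M * znorm k ^ (-(2 + 2 * ε))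
            * Real.exp (-((m : ℝ) + s) * znorm k ^ 2 / 2)) →
        ∀ t ∈ Set.Icc (0 : ℝ) 1, ∀ k : Z3, k ≠ 0 →
          ‖nsB H h t k‖ ≤ D * δ * M * Real.exp (-((m : ℝ) + t) * znorm k ^ 2 / 3)
              * (1 - Real.exp (-t * znorm k ^ 2)) / znorm k ∧
          ‖nsB h H t k‖ ≤ D * δ * M * Real.exp (-((m : ℝ) + t) * znorm k ^ 2 / 3)
              * (1 - Real.exp (-t * znorm k ^ 2)) / znorm k := by
  refine ⟨6 * π * latticeSumInvFour, by have := latticeSumInvFour_pos; positivity, ?_⟩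
  intro δ M hδ hM m v₀ H h hv₀ hH hh t ht k hk
  have hH_le : ∀ s j, j ≠ 0 → ‖H s j‖ ≤ δ * (znorm j)⁻¹ ^ 2 * exp (-(m + s) * znorm j ^ 2) := by
    intro s j hj
    rw [hH, norm_smul, Real.norm_of_nonneg (exp_pos _).le, mul_comm]
    grw [hv₀ j hj, rpow_neg_le_inv_pow (n := 2) (one_le_znorm_s6 hj) (by push_cast; linarith)]
  have hh_le : ∀ s ∈ Set.Icc (0 : ℝ) 1, ∀ j, j ≠ 0 →
      ‖h s j‖ ≤ M * (znorm j)⁻¹ ^ 2 * exp (-(m + s) * znorm j ^ 2 / 2) := by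
    intro s hs j hj
    grw [hh s hs j hj, rpow_neg_le_inv_pow (n := 2) (one_le_znorm_s6 hj) (by push_cast; linarith)]
  have hs : ∀ s ∈ Set.Icc 0 t, 0 ≤ (m : ℝ) + s ∧ s ∈ Set.Icc (0 : ℝ) 1 :=
    fun s hs => ⟨add_nonneg m.cast_nonneg hs.1, hs.1, hs.2.trans ht.2⟩
  have hHh : ∀ s ∈ Set.Icc 0 t, ∀ l, l ≠ 0 → l ≠ k → ‖H s (k - l)‖ * ‖h s l‖
      ≤ δ * M * exp (-(m + s) * znorm k ^ 2 / 3) * ((znorm (k - l))⁻¹ ^ 2 * (znorm l)⁻¹ ^ 2) :=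
    fun s hst l hl hlk => by
      simpa only [sub_add_cancel] using norm_mul_norm_le_of_gaussian_bounds hδ.le hM.le
        (hs s hst).1 (hH_le s (k - l) (sub_ne_zero.mpr hlk.symm)) (hh_le s (hs s hst).2 l hl)
  have hhH : ∀ s ∈ Set.Icc 0 t, ∀ l, l ≠ 0 → l ≠ k → ‖h s (k - l)‖ * ‖H s l‖
      ≤ δ * M * exp (-(m + s) * znorm k ^ 2 / 3) * ((znorm (k - l))⁻¹ ^ 2 * (znorm l)⁻¹ ^ 2) :=
    fun s hst l hl hlk => by
      rw [mul_comm, mul_comm ((znorm (k - l))⁻¹ ^ 2)]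
      simpa only [add_sub_cancel] using norm_mul_norm_le_of_gaussian_bounds hδ.le hM.le
        (hs s hst).1 (hH_le s l hl) (hh_le s (hs s hst).2 (k - l) (sub_ne_zero.mpr hlk.symm))
  exact ⟨(norm_nsB_le hk ht.1 m (by positivity) hHh).trans_eq (by ring),
    (norm_nsB_le hk ht.1 m (by positivity) hhH).trans_eq (by ring)⟩

/-- Let `0 < 3ε < 1`, `α = 2 + ε`.  There is a constant `D > 0` depending only
on `ε` such that: whenever `δ, M > 0`, `m ≥ 0` is an integer,
`H(s,k) = exp(−(m + s)|k|²) v₀(k)` with `|v₀(k)| ≤ δ|k|^{−α}` for `k ≠ 0`, and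
`h` satisfies `|h(s,k)| ≤ M |k|^{−(2+2ε)} exp(−(m + s)|k|²/2)` for `s ∈ [0,1]`,
`k ≠ 0`, then for all `t ∈ [0, 1]` and `k ≠ 0`,
`|B(H,h)(t,k)| ≤ D δ M exp(−(m + t)|k|²/3)(1 − exp(−t|k|²))/|k|`,
and the same bound holds for `|B(h,H)(t,k)|`. -/
theorem statement6 (ε : ℝ) (hε : 0 < 3 * ε) (hε1 : 3 * ε < 1)
    (α : ℝ) (hα : α = 2 + ε) :
    ∃ D : ℝ, 0 < D ∧
      ∀ (δ M : ℝ), 0 < δ → 0 < M → ∀ (m : ℕ) (v₀ : Z3 → C3) (H h : ℝ → Z3 → C3),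
        (∀ k : Z3, k ≠ 0 → ‖v₀ k‖ ≤ δ * znorm k ^ (-α)) →
        (∀ (s : ℝ) (k : Z3), H s k = Real.exp (-((m : ℝ) + s) * znorm k ^ 2) • v₀ k) →
        (∀ s ∈ Set.Icc (0 : ℝ) 1, ∀ k : Z3, k ≠ 0 →
          ‖h s k‖ ≤ M * znorm k ^ (-(2 + 2 * ε))
            * Real.exp (-((m : ℝ) + s) * znorm k ^ 2 / 2)) →
        ∀ t ∈ Set.Icc (0 : ℝ) 1, ∀ k : Z3, k ≠ 0 →
          ‖nsB H h t k‖ ≤ D * δ * M * Real.exp (-((m : ℝ) + t) * znorm k ^ 2 / 3)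
              * (1 - Real.exp (-t * znorm k ^ 2)) / znorm k ∧
          ‖nsB h H t k‖ ≤ D * δ * M * Real.exp (-((m : ℝ) + t) * znorm k ^ 2 / 3)
              * (1 - Real.exp (-t * znorm k ^ 2)) / znorm k :=
  statement6_general ε hε α hα
end
end
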